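/- For every integer k ≥ 1, |P_{2k+1}^prod(E) - q^{-1}·(P_k^prod(E))²| ≤ q^{(d-1)/2}·P_{2k}^prod(E), and |P_{2k}^prod(E) - q^{-1}·P_k^prod(E)·P_{k-1}^prod(E)| ≤ q^{(d-1)/2}·(P_{2k}^prod(E)·P_{2k-2}^prod(E))^{1/2}. -/

import Mathlib

/-!
Let `f_m(x)` count the paths of length `m` in `E` that start at `x`, and let `B` be the `0/1`
matrix of the relation `x · y = t` on `F_q^d`. Cutting a path at a vertex or at an edge gives
`P_{m+n} = ⟨f_m, f_n⟩` and `P_{m+n+1} = ⟨f_m, B f_n⟩`.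

With `C = B - q⁻¹ J` one has `⟨f, B g⟩ - q⁻¹ (∑ f) (∑ g) = ⟨f, C g⟩`. Counting the solutions of one
or of two independent linear equations shows that `Cᵀ C` has diagonal entries at most `q^{d-1}`
and nonpositive off-diagonal entries; for dependent `y ≠ y'` the equations `x · y = t = x · y'`
have no common solution because `t ≠ 0`. Hence `‖C g‖² ≤ q^{d-1} ‖g‖²` for `g ≥ 0`, and
Cauchy–Schwarz gives `|⟨f, B g⟩ - q⁻¹ (∑ f) (∑ g)| ≤ q^{(d-1)/2} ‖f‖ ‖g‖`, which is applied to
`(f, g) = (f_k, f_k)` and `(f_k, f_{k-1})`.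
-/

open Finset
open scoped Classical

/-- The number of paths of length `k` in the dot-product graph of `E`: tuples
`(x₀,…,x_k) ∈ E^{k+1}` with `x_{i-1} · x_i = t` for `i = 1,…,k`, where
`x·y = x₁y₁ + ⋯ + x_dy_d`. -/
noncomputable def pathCountProd (F : Type) [Field F] [Fintype F] [DecidableEq F]
    (d k : ℕ) (t : F) (E : Finset (Fin d → F)) : ℕ :=
  (Finset.univ.filter (fun x : Fin (k + 1) → (Fin d → F) =>
    (∀ i, x i ∈ E) ∧ ∀ i : Fin k, ∑ j, x i.castSucc j * x i.succ j = t)).card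

open Matrix

theorem sum_walks_eq_dotProduct_pow_mulVec {R V : Type*} [CommSemiring R] [Fintype V]
    [DecidableEq V] (M : Matrix V V R) (u v : V → R) (m : ℕ) :
    ∑ p : Fin (m + 1) → V, u (p 0) * (∏ i : Fin m, M (p i.castSucc) (p i.succ)) *
      v (p (Fin.last m)) = u ⬝ᵥ (M ^ m *ᵥ v) := by
  induction m generalizing u with
  | zero =>
    rw [← (Equiv.funUnique (Fin 1) V).symm.sum_comp]
    simp [dotProduct]
  | succ m ih =>
    rw [← (Fin.consEquiv fun _ => V).sum_comp, Fintype.sum_prod_type, Finset.sum_comm,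
      pow_succ', ← mulVec_mulVec, dotProduct_mulVec, ← ih]
    refine sum_congr rfl fun p _ => ?_
    simp only [Fin.consEquiv_apply, Fin.prod_univ_succ, Fin.castSucc_zero, Fin.cons_zero,
      Fin.cons_succ, ← Fin.succ_castSucc, ← Fin.succ_last, vecMul, dotProduct, sum_mul]
    exact sum_congr rfl fun x _ => by ring

theorem Matrix.IsSymm.pow_mulVec_dotProduct_pow_mulVec {R n : Type*} [CommSemiring R]
    [Fintype n] [DecidableEq n] {A : Matrix n n R} (hA : A.IsSymm) (m k : ℕ) (v w : n → R) :
    (A ^ m *ᵥ v) ⬝ᵥ (A ^ k *ᵥ w) = v ⬝ᵥ (A ^ (m + k) *ᵥ w) := by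
  rw [← vecMul_transpose, ← dotProduct_mulVec, (hA.pow m).eq, mulVec_mulVec, pow_add]

theorem Matrix.mulVec_dotProduct_mulVec {R m n : Type*} [CommSemiring R] [Fintype m] [Fintype n]
    (A : Matrix m n R) (v w : n → R) :
    (A *ᵥ v) ⬝ᵥ (A *ᵥ w) = v ⬝ᵥ ((Aᵀ * A) *ᵥ w) := by
  rw [← mulVec_mulVec, dotProduct_mulVec v, vecMul_transpose]

theorem abs_dotProduct_le_sqrt_mul_sqrt {V : Type*} [Fintype V] (f h : V → ℝ) :
    |f ⬝ᵥ h| ≤ √(f ⬝ᵥ f) * √(h ⬝ᵥ h) := by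
  have hff : 0 ≤ f ⬝ᵥ f := sum_nonneg fun x _ => mul_self_nonneg (f x)
  rw [← Real.sqrt_mul hff]
  apply Real.abs_le_sqrt
  simpa [dotProduct, pow_two] using sum_mul_sq_le_sq_mul_sq univ f h

theorem dotProduct_mulVec_le_of_offDiag_nonpos {V : Type*} [Fintype V] [DecidableEq V]
    {G : Matrix V V ℝ} {c : ℝ} (hdiag : ∀ y, G y y ≤ c) (hoff : ∀ y y', y ≠ y' → G y y' ≤ 0)
    {g : V → ℝ} (hg : 0 ≤ g) :
    g ⬝ᵥ (G *ᵥ g) ≤ c * (g ⬝ᵥ g) := by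
  rw [dotProduct, dotProduct, mul_sum]
  refine sum_le_sum fun y _ => ?_
  have hrow : (G *ᵥ g) y ≤ G y y * g y := by
    calc (G *ᵥ g) y = ∑ y', G y y' * g y' := rfl
      _ ≤ ∑ y', if y = y' then G y y * g y else 0 := sum_le_sum fun y' _ => by
          split_ifs with h
          · rw [h]
          · exact mul_nonpos_of_nonpos_of_nonneg (hoff y y' h) (hg y')
      _ = G y y * g y := by simp
  calc g y * (G *ᵥ g) y ≤ g y * (G y y * g y) := mul_le_mul_of_nonneg_left hrow (hg y)
    _ ≤ c * (g y * g y) := by nlinarith [hdiag y, hg y, mul_self_nonneg (g y)]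

theorem AddMonoidHom.card_fiber_mul_card_of_surjective {G H : Type*} [AddCommGroup G]
    [AddCommGroup H] [Fintype G] [Fintype H] [DecidableEq H] (φ : G →+ H)
    (hφ : Function.Surjective φ) (b : H) :
    #{x | φ x = b} * Fintype.card H = Fintype.card G := by
  have fibers_eq : ∀ b', #{x | φ x = b'} = #{x | φ x = b} := fun b' => by
    obtain ⟨u, hu⟩ := hφ (b - b')
    exact card_nbij' (· + u) (· - u) (fun _ => by simp_all) (fun _ => by simp_all)
      (fun _ _ => by simp) (fun _ _ => by simp)
  calc #{x | φ x = b} * Fintype.card H = ∑ b' : H, #{x | φ x = b'} := by simp [fibers_eq, mul_comm]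
    _ = Fintype.card G := (card_eq_sum_card_fiberwise fun _ _ => mem_univ _).symm

theorem Matrix.card_mulVec_fiber_mul_of_linearIndependent {K m n : Type*} [Field K]
    [Fintype K] [DecidableEq K] [Fintype m] [DecidableEq m] [Fintype n] [DecidableEq n]
    (A : Matrix m n K) (hA : LinearIndependent K A.row) (b : m → K) :
    #{x | A *ᵥ x = b} * Fintype.card K ^ Fintype.card m = Fintype.card K ^ Fintype.card n := by
  have hsurj : Function.Surjective A.mulVecLin := by
    rw [← LinearMap.range_eq_top]
    apply Submodule.eq_top_of_finrank_eq
    rw [Module.finrank_fintype_fun_eq_card, ← hA.rank_matrix, Matrix.rank]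
  convert A.mulVecLin.toAddMonoidHom.card_fiber_mul_card_of_surjective hsurj b using 4 <;>
    simp

section DotProduct

variable {K ι : Type*} [Field K] [Fintype K] [DecidableEq K] [Fintype ι] [DecidableEq ι]

theorem card_dotProduct_fiber_mul {y : ι → K} (hy : y ≠ 0) (c : K) :
    #{x : ι → K | x ⬝ᵥ y = c} * Fintype.card K = Fintype.card K ^ Fintype.card ι := by
  have := (of ![y]).card_mulVec_fiber_mul_of_linearIndependent
    (by simpa [Matrix.row] using linearIndependent_unique_iff.mpr hy) ![c]
  simpa [funext_iff, Fin.forall_fin_one, mulVec, dotProduct_comm] using this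

theorem card_dotProduct_pair_fiber_mul {y y' : ι → K} (h : LinearIndependent K ![y, y'])
    (c c' : K) :
    #{x : ι → K | x ⬝ᵥ y = c ∧ x ⬝ᵥ y' = c'} * Fintype.card K ^ 2 =
      Fintype.card K ^ Fintype.card ι := by
  have := (of ![y, y']).card_mulVec_fiber_mul_of_linearIndependent h ![c, c']
  simpa [funext_iff, Fin.forall_fin_two, mulVec, dotProduct_comm] using this

noncomputable def dotEqMatrix (t : K) : Matrix (ι → K) (ι → K) ℝ :=
  of fun x y => if x ⬝ᵥ y = t then 1 else 0

noncomputable def centeredDotMatrix (t : K) : Matrix (ι → K) (ι → K) ℝ :=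
  of fun x y => dotEqMatrix t x y - (Fintype.card K : ℝ)⁻¹

variable {t : K}

theorem sum_dotEqMatrix_apply (ht : t ≠ 0) (y : ι → K) :
    ∑ x, dotEqMatrix t x y =
      if y = 0 then 0 else (Fintype.card K : ℝ) ^ Fintype.card ι / Fintype.card K := by
  simp only [dotEqMatrix, of_apply, sum_boole]
  split_ifs with hy
  · simp [hy, ht.symm]
  · rw [eq_div_iff (by positivity)]
    exact_mod_cast card_dotProduct_fiber_mul hy t

theorem sum_dotEqMatrix_mul_of_linearIndependent {y y' : ι → K}
    (h : LinearIndependent K ![y, y']) :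
    ∑ x, dotEqMatrix t x y * dotEqMatrix t x y' =
      (Fintype.card K : ℝ) ^ Fintype.card ι / Fintype.card K ^ 2 := by
  simp only [dotEqMatrix, of_apply, ite_zero_mul_ite_zero, mul_one, sum_boole]
  rw [eq_div_iff (by positivity)]
  exact_mod_cast card_dotProduct_pair_fiber_mul h t t

theorem sum_dotEqMatrix_mul_of_not_linearIndependent (ht : t ≠ 0) {y y' : ι → K}
    (hne : y ≠ y') (h : ¬LinearIndependent K ![y, y']) :
    ∑ x, dotEqMatrix t x y * dotEqMatrix t x y' = 0 := by
  refine sum_eq_zero fun x _ => ?_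
  simp only [dotEqMatrix, of_apply, mul_ite, mul_one, mul_zero]
  split_ifs with hy' hy <;> try rfl
  refine absurd (LinearIndependent.pair_iff.mpr fun a b hab => ?_) h
  have hsum : (a + b) * t = 0 := by
    simpa [dotProduct_add, dotProduct_smul, hy, hy', add_mul] using congrArg (x ⬝ᵥ ·) hab
  have hb : b = -a := by linear_combination (mul_eq_zero.mp hsum).resolve_right ht
  subst hb
  have ha : a • (y - y') = 0 := by simpa [smul_sub, sub_eq_add_neg] using hab
  simpa [sub_eq_zero, hne] using ha

theorem centeredDotMatrix_gram_apply (y y' : ι → K) :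
    ((centeredDotMatrix t)ᵀ * centeredDotMatrix t : Matrix (ι → K) (ι → K) ℝ) y y' =
      ∑ x, dotEqMatrix t x y * dotEqMatrix t x y' -
        (Fintype.card K : ℝ)⁻¹ * (∑ x, dotEqMatrix t x y + ∑ x, dotEqMatrix t x y') +
        (Fintype.card K : ℝ) ^ Fintype.card ι / Fintype.card K ^ 2 := by
  simp only [mul_apply, transpose_apply, centeredDotMatrix, of_apply, sub_mul, mul_sub,
    sum_sub_distrib, ← sum_mul, ← mul_sum, sum_const, card_univ, Fintype.card_fun, nsmul_eq_mul]
  push_cast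
  ring

theorem centeredDotMatrix_gram_apply_self_le (ht : t ≠ 0) (y : ι → K) :
    ((centeredDotMatrix t)ᵀ * centeredDotMatrix t : Matrix (ι → K) (ι → K) ℝ) y y ≤
      (Fintype.card K : ℝ) ^ Fintype.card ι / Fintype.card K := by
  have hB : ∀ x, dotEqMatrix t x y * dotEqMatrix t x y = dotEqMatrix t x y := fun x => by
    simp only [dotEqMatrix, of_apply]; split_ifs <;> norm_num
  rw [centeredDotMatrix_gram_apply, sum_congr rfl fun x _ => hB x, sum_dotEqMatrix_apply ht]
  set q : ℝ := (Fintype.card K : ℝ)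
  have hq : 1 ≤ q := Nat.one_le_cast.mpr Fintype.card_pos
  have hqn : 0 ≤ q ^ Fintype.card ι / q := by positivity
  have hsq : q ^ Fintype.card ι / q ^ 2 = q⁻¹ * (q ^ Fintype.card ι / q) := by ring
  have hinv : q⁻¹ ≤ 1 := inv_le_one_of_one_le₀ hq
  split_ifs <;> nlinarith [inv_nonneg.mpr (zero_le_one.trans hq)]

theorem centeredDotMatrix_gram_apply_nonpos (ht : t ≠ 0) {y y' : ι → K} (hne : y ≠ y') :
    ((centeredDotMatrix t)ᵀ * centeredDotMatrix t : Matrix (ι → K) (ι → K) ℝ) y y' ≤ 0 := by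
  set q : ℝ := (Fintype.card K : ℝ)
  have hq_inv : 0 ≤ q⁻¹ := by positivity
  have hqn : 0 ≤ q ^ Fintype.card ι / q := by positivity
  have hsq : q ^ Fintype.card ι / q ^ 2 = q⁻¹ * (q ^ Fintype.card ι / q) := by ring
  rw [centeredDotMatrix_gram_apply, sum_dotEqMatrix_apply ht, sum_dotEqMatrix_apply ht]
  by_cases h : LinearIndependent K ![y, y']
  · rw [sum_dotEqMatrix_mul_of_linearIndependent h, if_neg (by simpa using h.ne_zero 0),
      if_neg (by simpa using h.ne_zero 1)]
    linarith
  · rw [sum_dotEqMatrix_mul_of_not_linearIndependent ht hne h]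
    split_ifs with hy hy' <;> first | exact absurd (hy.trans hy'.symm) hne | nlinarith

theorem abs_dotProduct_dotEqMatrix_mulVec_sub_le (ht : t ≠ 0) (f g : (ι → K) → ℝ) (hg : 0 ≤ g) :
    |f ⬝ᵥ (dotEqMatrix t *ᵥ g) - (Fintype.card K : ℝ)⁻¹ * (∑ x, f x) * ∑ x, g x| ≤
      (Fintype.card K : ℝ) ^ (((Fintype.card ι : ℝ) - 1) / 2) * √(f ⬝ᵥ f) * √(g ⬝ᵥ g) := by
  set q : ℝ := (Fintype.card K : ℝ)
  set C : Matrix (ι → K) (ι → K) ℝ := centeredDotMatrix t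
  have hcenter : f ⬝ᵥ (C *ᵥ g) = f ⬝ᵥ (dotEqMatrix t *ᵥ g) - q⁻¹ * (∑ x, f x) * ∑ x, g x := by
    simp only [C, centeredDotMatrix, mulVec, dotProduct, of_apply, sub_mul, sum_sub_distrib,
      mul_sub, ← mul_sum]
    rw [← sum_mul]
    ring
  have hgram : (C *ᵥ g) ⬝ᵥ (C *ᵥ g) ≤ q ^ Fintype.card ι / q * (g ⬝ᵥ g) := by
    rw [mulVec_dotProduct_mulVec]
    exact dotProduct_mulVec_le_of_offDiag_nonpos (centeredDotMatrix_gram_apply_self_le ht)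
      (fun _ _ => centeredDotMatrix_gram_apply_nonpos ht) hg
  have hsqrt : √(q ^ Fintype.card ι / q) = q ^ (((Fintype.card ι : ℝ) - 1) / 2) := by
    rw [Real.sqrt_eq_rpow, ← Real.rpow_natCast, ← Real.rpow_sub_one (by positivity),
      ← Real.rpow_mul (by positivity)]
    ring_nf
  calc |f ⬝ᵥ (dotEqMatrix t *ᵥ g) - q⁻¹ * (∑ x, f x) * ∑ x, g x|
      = |f ⬝ᵥ (C *ᵥ g)| := by rw [hcenter]
    _ ≤ √(f ⬝ᵥ f) * √((C *ᵥ g) ⬝ᵥ (C *ᵥ g)) := abs_dotProduct_le_sqrt_mul_sqrt _ _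
    _ ≤ √(f ⬝ᵥ f) * √(q ^ Fintype.card ι / q * (g ⬝ᵥ g)) := by gcongr
    _ = q ^ (((Fintype.card ι : ℝ) - 1) / 2) * √(f ⬝ᵥ f) * √(g ⬝ᵥ g) := by
      rw [Real.sqrt_mul (by positivity), hsqrt]; ring

end DotProduct

section Paths

variable {F : Type} [Field F] [DecidableEq F] {d : ℕ}

noncomputable def dotGraphMatrix (E : Finset (Fin d → F)) (t : F) :
    Matrix (Fin d → F) (Fin d → F) ℝ :=
  of fun x y => if x ∈ E ∧ y ∈ E ∧ x ⬝ᵥ y = t then 1 else 0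

theorem dotGraphMatrix_isSymm (E : Finset (Fin d → F)) (t : F) : (dotGraphMatrix E t).IsSymm :=
  IsSymm.ext fun x y => by simp only [dotGraphMatrix, of_apply, dotProduct_comm x, and_left_comm,
    and_comm]

variable [Fintype F]

/-- The vector `f_m`: `pathVec E t m x` is the number of paths of length `m` in `E` starting
at `x`. -/
noncomputable def pathVec (E : Finset (Fin d → F)) (t : F) (m : ℕ) : (Fin d → F) → ℝ :=
  dotGraphMatrix E t ^ m *ᵥ (E : Set (Fin d → F)).indicator 1

variable {E : Finset (Fin d → F)} {t : F}

theorem pathVec_succ (m : ℕ) : pathVec E t (m + 1) = dotGraphMatrix E t *ᵥ pathVec E t m := by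
  rw [pathVec, pathVec, pow_succ', mulVec_mulVec]

theorem pathVec_nonneg (m : ℕ) : 0 ≤ pathVec E t m := by
  induction m with
  | zero => intro x; by_cases hx : x ∈ E <;> simp [pathVec, hx]
  | succ m ih =>
    rw [pathVec_succ]
    refine fun x => sum_nonneg fun y _ => mul_nonneg ?_ (ih y)
    simp only [dotGraphMatrix, of_apply]
    positivity

theorem pathVec_eq_zero_of_notMem {x : Fin d → F} (hx : x ∉ E) (m : ℕ) : pathVec E t m x = 0 := by
  cases m with
  | zero => simp [pathVec, hx]
  | succ m => simp [pathVec_succ, mulVec, dotProduct, dotGraphMatrix, hx]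

theorem pathCountProd_eq_indicator_dotProduct_pathVec (m : ℕ) :
    (pathCountProd F d m t E : ℝ) = (E : Set (Fin d → F)).indicator 1 ⬝ᵥ pathVec E t m := by
  rw [pathVec, ← sum_walks_eq_dotProduct_pow_mulVec, pathCountProd, natCast_card_filter]
  refine sum_congr rfl fun p _ => ?_
  simp only [Set.indicator_apply, mem_coe, Pi.one_apply, dotGraphMatrix, of_apply,
    Fintype.prod_boole, ite_zero_mul_ite_zero, mul_one]
  refine if_congr ⟨fun ⟨hE, h⟩ => ⟨⟨hE 0, fun i => ⟨hE _, hE _, h i⟩⟩, hE _⟩,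
    fun ⟨⟨h0, h⟩, _⟩ => ⟨fun i => Fin.cases h0 (fun j => (h j).2.1) i, fun i => (h i).2.2⟩⟩ rfl rfl

theorem sum_pathVec (m : ℕ) : ∑ x, pathVec E t m x = pathCountProd F d m t E := by
  rw [pathCountProd_eq_indicator_dotProduct_pathVec]
  refine sum_congr rfl fun x _ => ?_
  by_cases hx : x ∈ E
  · simp [hx]
  · simp [pathVec_eq_zero_of_notMem hx]

theorem pathVec_dotProduct_pathVec (m k : ℕ) :
    pathVec E t m ⬝ᵥ pathVec E t k = pathCountProd F d (m + k) t E := by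
  rw [pathCountProd_eq_indicator_dotProduct_pathVec, pathVec, pathVec, pathVec,
    (dotGraphMatrix_isSymm E t).pow_mulVec_dotProduct_pow_mulVec]

theorem dotProduct_dotEqMatrix_mulVec_eq_dotGraphMatrix {a b : (Fin d → F) → ℝ}
    (ha : ∀ x ∉ E, a x = 0) (hb : ∀ x ∉ E, b x = 0) :
    a ⬝ᵥ (dotEqMatrix t *ᵥ b) = a ⬝ᵥ (dotGraphMatrix E t *ᵥ b) := by
  simp only [dotProduct, mulVec, mul_sum]
  refine sum_congr rfl fun x _ => sum_congr rfl fun y _ => ?_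
  by_cases hx : x ∈ E
  · by_cases hy : y ∈ E
    · simp [dotEqMatrix, dotGraphMatrix, hx, hy]
    · simp [hb y hy]
  · simp [ha x hx]

theorem pathVec_dotProduct_dotEqMatrix_mulVec (m k : ℕ) :
    pathVec E t m ⬝ᵥ (dotEqMatrix t *ᵥ pathVec E t k) = pathCountProd F d (m + k + 1) t E := by
  rw [dotProduct_dotEqMatrix_mulVec_eq_dotGraphMatrix (fun _ hx => pathVec_eq_zero_of_notMem hx m)
    (fun _ hx => pathVec_eq_zero_of_notMem hx k), ← pathVec_succ, pathVec_dotProduct_pathVec]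
  rfl

end Paths

theorem path_count_prod_recursive_general (F : Type) [Field F] [Fintype F] [DecidableEq F]
    (d : ℕ) (t : F) (ht : t ≠ 0) (E : Finset (Fin d → F))
    (q : ℝ) (hq : q = (Fintype.card F : ℝ))
    (k : ℕ) (hk : 1 ≤ k) :
    |(pathCountProd F d (2 * k + 1) t E : ℝ) -
        q⁻¹ * (pathCountProd F d k t E : ℝ) ^ 2| ≤
      q ^ (((d : ℝ) - 1) / 2) * (pathCountProd F d (2 * k) t E : ℝ) ∧
    |(pathCountProd F d (2 * k) t E : ℝ) -
        q⁻¹ * (pathCountProd F d k t E : ℝ) * (pathCountProd F d (k - 1) t E : ℝ)| ≤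
      q ^ (((d : ℝ) - 1) / 2) *
        Real.sqrt ((pathCountProd F d (2 * k) t E : ℝ) *
          (pathCountProd F d (2 * k - 2) t E : ℝ)) := by
  subst hq
  have key (m n : ℕ) := abs_dotProduct_dotEqMatrix_mulVec_sub_le ht (pathVec E t m)
    (pathVec E t n) (pathVec_nonneg n)
  simp only [Fintype.card_fin, pathVec_dotProduct_dotEqMatrix_mulVec, sum_pathVec,
    pathVec_dotProduct_pathVec, ← two_mul, mul_assoc _ √_] at key
  constructor
  · simpa only [← two_mul, sq, mul_assoc, Real.mul_self_sqrt (Nat.cast_nonneg _)] using key k k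
  · have h := key k (k - 1)
    rwa [show k + (k - 1) + 1 = 2 * k by omega, show 2 * (k - 1) = 2 * k - 2 by omega,
      ← Real.sqrt_mul (Nat.cast_nonneg _)] at h

theorem path_count_prod_recursive (F : Type) [Field F] [Fintype F] [DecidableEq F]
    (d : ℕ) (hd : 2 ≤ d) (t : F) (ht : t ≠ 0) (E : Finset (Fin d → F))
    (q : ℝ) (hq : q = (Fintype.card F : ℝ))
    (k : ℕ) (hk : 1 ≤ k) :
    |(pathCountProd F d (2 * k + 1) t E : ℝ) -
        q⁻¹ * (pathCountProd F d k t E : ℝ) ^ 2| ≤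
      q ^ (((d : ℝ) - 1) / 2) * (pathCountProd F d (2 * k) t E : ℝ) ∧
    |(pathCountProd F d (2 * k) t E : ℝ) -
        q⁻¹ * (pathCountProd F d k t E : ℝ) * (pathCountProd F d (k - 1) t E : ℝ)| ≤
      q ^ (((d : ℝ) - 1) / 2) *
        Real.sqrt ((pathCountProd F d (2 * k) t E : ℝ) *
          (pathCountProd F d (2 * k - 2) t E : ℝ)) :=
  path_count_prod_recursive_general F d t ht E q hq k hk
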